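/- arXiv:1609.02425 — 3 statements merged into one kernel-verified Lean document; each statement's English description precedes it below -/
import Mathlib

section
/- If 1 < q₁ < q₂ and x > 1, then ln_{q₂}(x) ≥ ((q₁ - 1)/(q₂ - 1)) · ln_{q₁}(x). -/
open Real

/-- If `1 < q₁ < q₂` and `x > 1`, then with `ln_q(x) = (x^(1-q) - 1)/(1-q)`,
`ln_{q₂}(x) ≥ ((q₁-1)/(q₂-1)) · ln_{q₁}(x)`. -/
theorem q_log_comparison (q₁ q₂ x : ℝ) (hq₁ : 1 < q₁) (hq₁₂ : q₁ < q₂) (hx : 1 < x) :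
    (x ^ (1 - q₂) - 1) / (1 - q₂)
      ≥ ((q₁ - 1) / (q₂ - 1)) * ((x ^ (1 - q₁) - 1) / (1 - q₁)) := by
  have h1 : (0:ℝ) < q₁ - 1 := by linarith
  have h2 : (0:ℝ) < q₂ - 1 := by linarith
  have key : x ^ (1 - q₂) ≤ x ^ (1 - q₁) :=
    (Real.rpow_le_rpow_left_iff hx).mpr (by linarith)
  have e1 : (x ^ (1 - q₂) - 1) / (1 - q₂) = (1 - x ^ (1 - q₂)) / (q₂ - 1) := by
    rw [div_eq_div_iff (by linarith) (by linarith)]; ring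
  have e2 : ((q₁ - 1) / (q₂ - 1)) * ((x ^ (1 - q₁) - 1) / (1 - q₁))
      = (1 - x ^ (1 - q₁)) / (q₂ - 1) := by
    rw [div_mul_div_comm, div_eq_div_iff (by nlinarith) (by linarith)]
    ring
  rw [ge_iff_le, e1, e2, div_le_div_iff_of_pos_right h2]
  linarith
end

section
/- Let 1 < q < 2 and f be a continuous symmetric density supported in [-a,a]. Then f̃_q(-iτ) = ∫_{-a}^a f(x)/(1 - (q-1)τ x f(x)^{q-1})^{1/(q-1)} dx > 1 for every τ with 0 < τ < 1/(m(q-1)), where m = max x f(x)^{q-1}. -/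
open Real Set MeasureTheory

lemma two_le_inv_add_inv' {D1 D2 : ℝ} (h1 : 0 < D1) (h2 : 0 < D2) (h : D1 * D2 ≤ 1) :
    2 ≤ 1 / D1 + 1 / D2 := by
  rw [div_add_div _ _ h1.ne' h2.ne', le_div_iff₀ (mul_pos h1 h2)]
  nlinarith [sq_nonneg (D1 - D2), mul_pos h1 h2]

lemma two_lt_inv_add_inv' {D1 D2 : ℝ} (h1 : 0 < D1) (h2 : 0 < D2) (h : D1 * D2 < 1) :
    2 < 1 / D1 + 1 / D2 := by
  rw [div_add_div _ _ h1.ne' h2.ne', lt_div_iff₀ (mul_pos h1 h2)]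
  nlinarith [sq_nonneg (D1 - D2), mul_pos h1 h2]

/-- For `1 < q < 2` and a continuous symmetric density `f` supported in `[-a,a]`, the
q-Fourier transform at a purely imaginary argument satisfies
`f̃_q(-iτ) = ∫_{-a}^a f(x)/(1 - (q-1)τ x f(x)^{q-1})^{1/(q-1)} dx > 1`
for every `0 < τ < 1/(m(q-1))`, where `m = max x f(x)^{q-1}`. -/
theorem q_fourier_imaginary_gt_one (q a : ℝ) (hq : 1 < q) (hq2 : q < 2) (ha : 0 < a)
    (f : ℝ → ℝ) (hf_cont : Continuous f) (hf_nonneg : ∀ x, 0 ≤ f x)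
    (hf_symm : ∀ x, f (-x) = f x) (hf_int : ∫ x, f x = 1)
    (hf_supp : ∀ x, a < |x| → f x = 0)
    (m : ℝ) (hm : IsGreatest ((fun x => x * f x ^ (q - 1)) '' Ioc 0 a) m)
    (τ : ℝ) (hτ : 0 < τ) (hτ' : τ < 1 / (m * (q - 1))) :
    (∫ x in (-a)..a, f x / (1 - (q - 1) * τ * x * f x ^ (q - 1)) ^ (1 / (q - 1))) > 1 := by
  have hq1 : 0 < q - 1 := by linarith
  have hp : 0 < 1 / (q - 1) := by positivity
  set p : ℝ := 1 / (q - 1) with hpdef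
  set T : ℝ → ℝ := fun x => (q - 1) * τ * x * f x ^ (q - 1) with hTdef
  set g : ℝ → ℝ := fun x => f x / (1 - T x) ^ p with hgdef
  -- there is a point in (0,a) where f is positive
  have hex : ∃ x0 ∈ Ioo (0:ℝ) a, 0 < f x0 := by
    by_contra h
    push_neg at h
    have hzero : ∀ x ∈ Ioo (0:ℝ) a, f x = 0 := fun x hx => le_antisymm (h x hx) (hf_nonneg x)
    have hE : Set.EqOn f (fun _ => (0:ℝ)) (closure (Ioo (0:ℝ) a)) :=
      Set.EqOn.closure (fun x hx => hzero x hx) hf_cont continuous_const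
    rw [closure_Ioo (ne_of_lt ha)] at hE
    have hall : ∀ x, f x = 0 := by
      intro x
      rcases le_or_gt 0 x with hx | hx
      · rcases le_or_gt x a with h2 | h2
        · exact hE ⟨hx, h2⟩
        · exact hf_supp x (by rwa [abs_of_nonneg hx])
      · have : f (-x) = 0 := by
          rcases le_or_gt (-x) a with h2 | h2
          · exact hE ⟨by linarith, h2⟩
          · exact hf_supp _ (by rwa [abs_of_nonneg (by linarith : (0:ℝ) ≤ -x)])
        rwa [← hf_symm x]
    rw [show (∫ x, f x) = 0 by simp [hall]] at hf_int
    norm_num at hf_int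
  obtain ⟨x0, hx0, hfx0⟩ := hex
  -- m is positive and (q-1) τ m < 1
  have hm0 : 0 < m :=
    lt_of_lt_of_le (mul_pos hx0.1 (rpow_pos_of_pos hfx0 _))
      (hm.2 ⟨x0, ⟨hx0.1, hx0.2.le⟩, rfl⟩)
  have hcm : (q - 1) * τ * m < 1 := by
    have h2 := (lt_div_iff₀ (by positivity : 0 < m * (q - 1))).mp hτ'
    nlinarith
  -- bounds on T
  have hTnn : ∀ x ∈ Icc (0:ℝ) a, 0 ≤ T x := by
    intro x hx
    exact mul_nonneg (mul_nonneg (by positivity) hx.1) (rpow_nonneg (hf_nonneg x) _)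
  have hTub : ∀ x ∈ Icc (0:ℝ) a, T x < 1 := by
    intro x hx
    rcases eq_or_lt_of_le hx.1 with h0 | h0
    · simp only [hTdef, ← h0]
      simp only [mul_zero, zero_mul]; linarith
    · have hle : x * f x ^ (q - 1) ≤ m := hm.2 ⟨x, ⟨h0, hx.2⟩, rfl⟩
      have : T x ≤ (q - 1) * τ * m := by
        have := mul_le_mul_of_nonneg_left hle (by positivity : (0:ℝ) ≤ (q - 1) * τ)
        calc T x = (q - 1) * τ * (x * f x ^ (q - 1)) := by ring
        _ ≤ (q - 1) * τ * m := this
      linarith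
  have hTneg : ∀ x, T (-x) = - T x := by
    intro x
    simp only [hTdef, hf_symm]
    ring
  -- continuity
  have hTcont : Continuous T := by
    have h1 : Continuous fun x => f x ^ (q - 1) :=
      hf_cont.rpow_const (fun x => Or.inr hq1.le)
    exact ((continuous_const.mul continuous_id).mul h1)
  have hDcont : Continuous fun x => (1 - T x) ^ p :=
    (continuous_const.sub hTcont).rpow_const (fun x => Or.inr hp.le)
  have hbase : ∀ x ∈ Icc (-a) a, 0 < 1 - T x := by
    intro x hx
    rcases le_or_gt x 0 with h0 | h0
    · have : T x ≤ 0 :=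
        mul_nonpos_of_nonpos_of_nonneg
          (mul_nonpos_of_nonneg_of_nonpos (by positivity) h0)
          (rpow_nonneg (hf_nonneg x) _)
      linarith
    · linarith [hTub x ⟨h0.le, hx.2⟩]
  have hgcont : ContinuousOn g (Icc (-a) a) :=
    ContinuousOn.div hf_cont.continuousOn hDcont.continuousOn
      (fun x hx => ne_of_gt (rpow_pos_of_pos (hbase x hx) p))
  have hmaps : ∀ x ∈ Icc (0:ℝ) a, -x ∈ Icc (-a) a := by
    intro x hx; constructor <;> [linarith [hx.2]; linarith [hx.1]]
  have hgncont : ContinuousOn (fun x => g (-x)) (Icc (0:ℝ) a) :=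
    hgcont.comp continuous_neg.continuousOn hmaps
  have hsub1 : Icc (-a) (0:ℝ) ⊆ Icc (-a) a := Icc_subset_Icc le_rfl ha.le
  have hsub2 : Icc (0:ℝ) a ⊆ Icc (-a) a := Icc_subset_Icc (by linarith) le_rfl
  have hgi1 : IntervalIntegrable g volume (-a) 0 :=
    (hgcont.mono hsub1).intervalIntegrable_of_Icc (by linarith)
  have hgi2 : IntervalIntegrable g volume 0 a :=
    (hgcont.mono hsub2).intervalIntegrable_of_Icc ha.le
  have hgni : IntervalIntegrable (fun x => g (-x)) volume 0 a :=
    hgncont.intervalIntegrable_of_Icc ha.le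
  -- f a = 0
  have hfa : f a = 0 := by
    have h1 : Filter.Tendsto f (nhdsWithin a (Ioi a)) (nhds (f a)) :=
      (hf_cont.tendsto a).mono_left nhdsWithin_le_nhds
    have h2 : Filter.Tendsto f (nhdsWithin a (Ioi a)) (nhds 0) := by
      apply Filter.Tendsto.congr' _ tendsto_const_nhds
      filter_upwards [self_mem_nhdsWithin] with x hx
      exact (hf_supp x (by rw [abs_of_pos (by linarith [mem_Ioi.mp hx] : (0:ℝ) < x)]; exact hx)).symm
    exact tendsto_nhds_unique h1 h2
  -- interval integral of f equals 1
  have hone : ∫ x in (-a)..a, f x = 1 := by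
    rw [intervalIntegral.integral_of_le (by linarith : -a ≤ a), ← hf_int]
    apply setIntegral_eq_integral_of_forall_compl_eq_zero
    intro x hx
    simp only [mem_Ioc, not_and_or, not_lt, not_le] at hx
    rcases hx with h1 | h1
    · rcases eq_or_lt_of_le h1 with h2 | h2
      · rw [h2, hf_symm, hfa]
      · exact hf_supp x (by rw [abs_of_neg (by linarith)]; linarith)
    · exact hf_supp x (by rwa [abs_of_pos (by linarith)])
  -- fold the two halves
  have hfold : ∀ (h : ℝ → ℝ), IntervalIntegrable h volume (-a) 0 →
      IntervalIntegrable h volume 0 a → IntervalIntegrable (fun x => h (-x)) volume 0 a →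
      ∫ x in (-a)..a, h x = ∫ x in (0:ℝ)..a, (h (-x) + h x) := by
    intro h hi1 hi2 hi3
    rw [← intervalIntegral.integral_add_adjacent_intervals hi1 hi2,
      intervalIntegral.integral_add hi3 hi2]
    congr 1
    simpa using (intervalIntegral.integral_comp_neg (a := (0:ℝ)) (b := a) h).symm
  have hfi1 : IntervalIntegrable f volume (-a) 0 :=
    (hf_cont.continuousOn).intervalIntegrable_of_Icc (by linarith)
  have hfi2 : IntervalIntegrable f volume 0 a :=
    (hf_cont.continuousOn).intervalIntegrable_of_Icc ha.le
  have hfni : IntervalIntegrable (fun x => f (-x)) volume 0 a :=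
    ((hf_cont.comp continuous_neg).continuousOn).intervalIntegrable_of_Icc ha.le
  have hfoldf : (1:ℝ) = ∫ x in (0:ℝ)..a, (f (-x) + f x) := by
    rw [← hone]; exact hfold f hfi1 hfi2 hfni
  have hfoldg : ∫ x in (-a)..a, g x = ∫ x in (0:ℝ)..a, (g (-x) + g x) :=
    hfold g hgi1 hgi2 hgni
  -- pointwise inequality on [0,a]
  have hpt : ∀ x ∈ Icc (0:ℝ) a, f (-x) + f x ≤ g (-x) + g x ∧
      (0 < f x → 0 < x → f (-x) + f x < g (-x) + g x) := by
    intro x hx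
    have ht0 : 0 ≤ T x := hTnn x hx
    have ht1 : T x < 1 := hTub x hx
    have hD1 : (0:ℝ) < (1 - T x) ^ p := rpow_pos_of_pos (by linarith) p
    have hD2 : (0:ℝ) < (1 + T x) ^ p := rpow_pos_of_pos (by linarith) p
    have hprod : (1 - T x) ^ p * (1 + T x) ^ p ≤ 1 := by
      rw [← Real.mul_rpow (by linarith) (by linarith)]
      exact Real.rpow_le_one (by nlinarith) (by nlinarith) hp.le
    have hgx : g x = f x / (1 - T x) ^ p := rfl
    have hgnx : g (-x) = f x / (1 + T x) ^ p := by
      simp only [hgdef, hTneg x, hf_symm x, sub_neg_eq_add]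
    constructor
    · have key := two_le_inv_add_inv' hD1 hD2 hprod
      have h2 := mul_le_mul_of_nonneg_left key (hf_nonneg x)
      rw [hgx, hgnx, hf_symm x]
      rw [mul_add, mul_one_div, mul_one_div] at h2
      linarith
    · intro hfx hxpos
      have htpos : 0 < T x :=
        mul_pos (mul_pos (by positivity) hxpos) (rpow_pos_of_pos hfx _)
      have hprod' : (1 - T x) ^ p * (1 + T x) ^ p < 1 := by
        rw [← Real.mul_rpow (by linarith) (by linarith)]
        exact Real.rpow_lt_one (by nlinarith) (by nlinarith) hp
      have key := two_lt_inv_add_inv' hD1 hD2 hprod'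
      have h2 := (mul_lt_mul_iff_right₀ hfx).mpr key
      rw [hgx, hgnx, hf_symm x]
      rw [mul_add, mul_one_div, mul_one_div] at h2
      linarith
  -- conclude
  have hmain : ∫ x in (0:ℝ)..a, (f (-x) + f x) < ∫ x in (0:ℝ)..a, (g (-x) + g x) := by
    apply intervalIntegral.integral_lt_integral_of_continuousOn_of_le_of_exists_lt ha
    · exact (((hf_cont.comp continuous_neg).continuousOn).add hf_cont.continuousOn)
    · exact hgncont.add (hgcont.mono hsub2)
    · exact fun x hx => (hpt x ⟨hx.1.le, hx.2⟩).1
    · exact ⟨x0, ⟨hx0.1.le, hx0.2.le⟩, (hpt x0 ⟨hx0.1.le, hx0.2.le⟩).2 hfx0 hx0.1⟩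
  rw [show (∫ x in (-a)..a, f x / (1 - (q - 1) * τ * x * f x ^ (q - 1)) ^ (1 / (q - 1))) =
    ∫ x in (-a)..a, g x from rfl, hfoldg]
  calc (1:ℝ) = ∫ x in (0:ℝ)..a, (f (-x) + f x) := hfoldf
  _ < ∫ x in (0:ℝ)..a, (g (-x) + g x) := hmain
end

section
/- Let q > 1, q₁ = (1+q)/(3-q) with 1 < q < q₁, and let y ≥ 1 be real. Then ln_{q₁}(y) ≥ ((3-q)/2) · ln_q(y). -/
open Real

/-- Let `q > 1`, `q₁ = (1+q)/(3-q)` with `1 < q < q₁`, and `y ≥ 1`. Then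
`ln_{q₁}(y) ≥ ((3-q)/2) · ln_q(y)`, where `ln_q(y) = (y^{1-q} - 1)/(1-q)`. -/
theorem q_log_q1_comparison (q q₁ y : ℝ) (hq : 1 < q) (hq₁ : q₁ = (1 + q) / (3 - q))
    (hqq₁ : q < q₁) (hy : 1 ≤ y) :
    (y ^ (1 - q₁) - 1) / (1 - q₁) ≥ ((3 - q) / 2) * ((y ^ (1 - q) - 1) / (1 - q)) := by
  have h3 : 0 < 3 - q := by
    by_contra h
    push_neg at h
    rcases eq_or_lt_of_le h with h' | h'
    · rw [hq₁, h', div_zero] at hqq₁; linarith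
    · have : (1 + q) / (3 - q) < 0 := div_neg_of_pos_of_neg (by linarith) (by linarith)
      rw [← hq₁] at this; linarith
  have hlt : 1 - q₁ < 0 := by linarith
  have hkey : y ^ (1 - q₁) ≤ y ^ (1 - q) :=
    Real.rpow_le_rpow_of_exponent_le hy (by linarith)
  have hRHS : (3 - q) / 2 * ((y ^ (1 - q) - 1) / (1 - q)) = (y ^ (1 - q) - 1) / (1 - q₁) := by
    rw [hq₁]
    have h1 : (1 : ℝ) - q ≠ 0 := by linarith
    have h2 : (3 : ℝ) - q ≠ 0 := ne_of_gt h3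
    have h4 : 1 - (1 + q) / (3 - q) = 2 * (1 - q) / (3 - q) := by
      field_simp; ring
    rw [h4, div_div_eq_mul_div, div_mul_div_comm]
    ring
  rw [ge_iff_le, hRHS, div_le_div_right_of_neg hlt]
  linarith
end
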